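/- arXiv:1611.04041 — 2 statements merged into one kernel-verified Lean document; each statement's English description precedes it below -/
import Mathlib

section
/- The map E : 𝔠 → ℂ defined by E(x, y) = exp(x)·exp(iy) for x ∈ ℝ and E(⊥, y) = 0 is a continuous monoid homomorphism from the additive monoid 𝔠 to the multiplicative monoid ℂ: E is continuous, E(0,0) = 1, and E(p + q) = E(p)·E(q) for all p, q ∈ 𝔠. -/
/-- The order topology on `WithBot ℝ`. -/
instance : TopologicalSpace (WithBot ℝ) := Preorder.topology _

instance : OrderTopology (WithBot ℝ) := ⟨rfl⟩

/-- The exponential map `E : 𝔠 → ℂ`, `E (x, y) = exp x · exp (i y)` for real `x`, and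
`E (⊥, y) = 0`. -/
noncomputable def E : WithBot ℝ × ℝ → ℂ :=
  fun p => (WithBot.recBotCoe (0 : ℂ) (fun x : ℝ => Complex.exp x) p.1) *
    Complex.exp (p.2 * Complex.I)

open Filter Topology Set

namespace WithBot

variable {ι β : Type*}

theorem recBotCoe_add [Add ι] [MulZeroClass β] {f : ι → β}
    (hf : ∀ a b, f (a + b) = f a * f b) (a b : WithBot ι) :
    recBotCoe (C := fun _ => β) 0 f (a + b) =
      recBotCoe (C := fun _ => β) 0 f a * recBotCoe (C := fun _ => β) 0 f b := by
  induction a <;> induction b <;> simp [← coe_add, hf]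

variable [LinearOrder ι] [TopologicalSpace ι] [OrderTopology ι] [TopologicalSpace β]

theorem continuous_recBotCoe {b : β} {f : ι → β} (hf : Continuous f)
    (hb : Tendsto f atBot (𝓝 b)) : Continuous (recBotCoe (C := fun _ => β) b f) := by
  refine continuous_iff_continuousAt.2 fun x => ?_
  induction x with
  | bot =>
    rcases isEmpty_or_nonempty ι with hι | hι
    · exact tendsto_const_nhds.congr fun x => by induction x with
        | bot => rfl
        | coe a => exact isEmptyElim a
    rw [ContinuousAt, recBotCoe_bot, tendsto_def]
    intro U hU
    obtain ⟨i, hi⟩ := mem_atBot_sets.1 (hb hU)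
    refine mem_of_superset (Iio_mem_nhds (bot_lt_coe i)) fun x hx => ?_
    induction x with
    | bot => exact mem_preimage.2 (mem_of_mem_nhds hU)
    | coe a => exact hi a (coe_lt_coe.1 hx).le
  | coe a =>
    rw [ContinuousAt, nhds_coe, tendsto_map'_iff]
    exact hf.continuousAt

end WithBot

theorem Complex.tendsto_exp_ofReal_atBot :
    Tendsto (fun x : ℝ => Complex.exp x) atBot (𝓝 0) :=
  Complex.tendsto_exp_comap_re_atBot.comp <| tendsto_comap_iff.2 <| by
    simp only [Function.comp_def, Complex.ofReal_re]
    exact tendsto_id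

/-- `E` is a continuous monoid homomorphism from the additive monoid `𝔠 = WithBot ℝ × ℝ`
to the multiplicative monoid `ℂ`. -/
theorem stmt2 :
    Continuous E ∧
    E (0, 0) = 1 ∧
    ∀ p q : WithBot ℝ × ℝ, E (p + q) = E p * E q := by
  have exp_coe_add := WithBot.recBotCoe_add (f := fun x : ℝ => Complex.exp x)
    fun a b => by push_cast; exact Complex.exp_add _ _
  refine ⟨?_, ?_, fun p q => ?_⟩
  · exact ((WithBot.continuous_recBotCoe (by fun_prop) Complex.tendsto_exp_ofReal_atBot).comp
      continuous_fst).mul (by fun_prop)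
  · rw [E, ← WithBot.coe_zero, WithBot.recBotCoe_coe]
    simp
  · simp only [E, Prod.fst_add, exp_coe_add, Prod.snd_add]
    push_cast
    rw [add_mul, Complex.exp_add]
    ring
end

section
/- For every positive integer n, the map fₙ : 𝔠 → ℂ defined by fₙ(x, y) = exp(x/n)·exp(iy/n) for x ∈ ℝ and fₙ(⊥, y) = 0 is a continuous monoid homomorphism from the additive monoid 𝔠 to the multiplicative monoid ℂ, and satisfies fₙ(p)ⁿ = E(p) for every p ∈ 𝔠. -/
noncomputable def f (n : ℕ) : WithBot ℝ × ℝ → ℂ :=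
  fun p => (WithBot.recBotCoe (0 : ℂ) (fun x : ℝ => Complex.exp (x / n)) p.1) *
    Complex.exp (p.2 * Complex.I / n)

noncomputable def expBot : WithBot ℝ → ℝ :=
  WithBot.recBotCoe 0 Real.exp

@[simp] lemma expBot_bot : expBot ⊥ = 0 := rfl

@[simp] lemma expBot_coe (x : ℝ) : expBot x = Real.exp x := rfl

lemma expBot_nonneg (a : WithBot ℝ) : 0 ≤ expBot a := by
  cases a <;> simp [Real.exp_nonneg]

lemma monotone_expBot : Monotone expBot := by
  intro a b hab
  induction a with
  | bot => exact expBot_nonneg b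
  | coe a =>
    obtain ⟨b, rfl, hab⟩ := WithBot.coe_le_iff.mp hab
    simpa using hab

lemma surjOn_expBot : Set.SurjOn expBot Set.univ (Set.Ici 0) := by
  intro t ht
  rcases (Set.mem_Ici.mp ht).eq_or_lt with rfl | ht
  · exact ⟨⊥, trivial, rfl⟩
  · exact ⟨(Real.log t : ℝ), trivial, Real.exp_log ht⟩

lemma continuous_expBot : Continuous expBot := by
  let g : WithBot ℝ → Set.Ici (0 : ℝ) := Set.codRestrict expBot _ expBot_nonneg
  have hg : Continuous g := by
    refine Monotone.continuous_of_surjective (fun a b hab => monotone_expBot hab) ?_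
    rintro ⟨t, ht⟩
    obtain ⟨a, -, hat⟩ := surjOn_expBot ht
    exact ⟨a, Subtype.ext hat⟩
  exact continuous_subtype_val.comp hg

lemma expBot_add (a b : WithBot ℝ) : expBot (a + b) = expBot a * expBot b := by
  induction a <;> induction b <;> simp [← WithBot.coe_add, Real.exp_add]

lemma E_apply (p : WithBot ℝ × ℝ) : E p = expBot p.1 * Complex.exp (p.2 * Complex.I) := by
  obtain ⟨a, y⟩ := p
  cases a <;> simp [E]

lemma continuous_E : Continuous E := by
  simp_rw [funext E_apply]
  exact (Complex.continuous_ofReal.comp (continuous_expBot.comp continuous_fst)).mul (by fun_prop)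

@[simp] lemma E_zero : E 0 = 1 := by
  simp [E_apply, ← WithBot.coe_zero]

lemma E_add (p q : WithBot ℝ × ℝ) : E (p + q) = E p * E q := by
  simp only [E_apply, Prod.fst_add, Prod.snd_add, expBot_add, Complex.ofReal_mul,
    Complex.ofReal_add, add_mul, Complex.exp_add]
  ring

lemma E_nsmul (n : ℕ) (p : WithBot ℝ × ℝ) : E (n • p) = E p ^ n := by
  induction n with
  | zero => simp
  | succ n ih => rw [succ_nsmul, E_add, ih, pow_succ]

noncomputable def divBy (c : ℝ) : WithBot ℝ × ℝ → WithBot ℝ × ℝ :=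
  Prod.map (WithBot.map (· / c)) (· / c)

@[simp] lemma divBy_zero (c : ℝ) : divBy c 0 = 0 :=
  Prod.ext (congrArg WithBot.some (zero_div c)) (zero_div c)

lemma divBy_add (c : ℝ) (p q : WithBot ℝ × ℝ) : divBy c (p + q) = divBy c p + divBy c q := by
  obtain ⟨a, y⟩ := p
  obtain ⟨b, z⟩ := q
  cases a <;> cases b <;> simp [divBy, ← WithBot.coe_add, add_div]

lemma continuous_divBy {c : ℝ} (hc : 0 < c) : Continuous (divBy c) :=
  (OrderIso.divRight₀ c hc).withBotCongr.continuous.prodMap (continuous_id.div_const c)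

lemma WithBot.nsmul_bot {α : Type*} [AddMonoid α] {n : ℕ} (hn : n ≠ 0) :
    n • (⊥ : WithBot α) = ⊥ := by
  obtain ⟨m, rfl⟩ := Nat.exists_eq_succ_of_ne_zero hn
  rw [succ_nsmul, WithBot.add_bot]

lemma nsmul_divBy {n : ℕ} (hn : n ≠ 0) (p : WithBot ℝ × ℝ) : n • divBy n p = p := by
  obtain ⟨a, y⟩ := p
  have hn' : (n : ℝ) ≠ 0 := Nat.cast_ne_zero.mpr hn
  refine Prod.ext ?_ (by simp [divBy, nsmul_eq_mul, mul_div_cancel₀ _ hn'])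
  cases a with
  | bot => exact WithBot.nsmul_bot hn
  | coe a => simp [divBy, ← WithBot.coe_nsmul, nsmul_eq_mul, mul_div_cancel₀ _ hn']

lemma f_eq_E_comp_divBy (n : ℕ) : f n = E ∘ divBy n := by
  ext ⟨a, y⟩
  cases a <;> simp [f, E, divBy, mul_div_right_comm]

/-- For every positive integer `n`, the map `fₙ` is a continuous monoid homomorphism from
the additive monoid `𝔠` to the multiplicative monoid `ℂ`, and `fₙ(p)ⁿ = E(p)` for all `p`. -/
theorem stmt7 :
    ∀ n : ℕ, 0 < n →
      Continuous (f n) ∧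
      f n (0, 0) = 1 ∧
      (∀ p q : WithBot ℝ × ℝ, f n (p + q) = f n p * f n q) ∧
      (∀ p : WithBot ℝ × ℝ, (f n p) ^ n = E p) := by
  intro n hn
  rw [f_eq_E_comp_divBy]
  refine ⟨continuous_E.comp (continuous_divBy (Nat.cast_pos.mpr hn)), ?_, fun p q => ?_,
    fun p => ?_⟩
  · exact (congrArg E (divBy_zero _)).trans E_zero
  · simp only [Function.comp_apply, divBy_add, E_add]
  · rw [Function.comp_apply, ← E_nsmul, nsmul_divBy hn.ne']
end
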